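/- Let α > 2, r₀ > 0, ḡ > 0, β ∈ [0,1), s > 0 with (1−β)s ≤ r₀, and define L = ⌊r₀/((1−β)s)⌋ (so L ≥ 1). Then 8ḡ·∑_{ℓ=1}^{L} ℓ + 8·∑_{ℓ=L+1}^{∞} ℓ^{1−α}(1−β)^{−α}s^{−α} ≤ (8/((1−β)²s²))·(ḡr₀² + 2^{α−2}/((α−2)r₀^{α−2})). -/

import Mathlib

/-!
With `c = (1 - β) s` and `L = ⌊r₀ / c⌋₊`, the near-field sum is at most `L² ≤ (r₀ / c)²`.
The far-field tail is dominated by the integral of the decreasing function `t ^ (1 - α)` over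
`[L, ∞)`, i.e. by `L ^ (2 - α) / (α - 2)`, and `L > r₀ / (2 c)` (valid as `r₀ / c ≥ 1`) turns this
into the `2 ^ (α - 2)` term.
-/

open Real Finset

theorem half_lt_natFloor {K : Type*} [Field K] [LinearOrder K] [IsStrictOrderedRing K]
    [FloorSemiring K] {x : K} (hx : 1 ≤ x) : x / 2 < ⌊x⌋₊ := by
  have h_one : (1 : K) ≤ ⌊x⌋₊ := by exact_mod_cast Nat.one_le_floor_iff x |>.2 hx
  rcases lt_or_ge x 2 with hx2 | hx2
  · linarith
  · linarith [Nat.lt_floor_add_one x]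

theorem sum_Icc_one_natFloor_le_sq {x : ℝ} (hx : 0 ≤ x) :
    ∑ ℓ ∈ Icc 1 ⌊x⌋₊, (ℓ : ℝ) ≤ x ^ 2 :=
  calc ∑ ℓ ∈ Icc 1 ⌊x⌋₊, (ℓ : ℝ) ≤ #(Icc 1 ⌊x⌋₊) • (⌊x⌋₊ : ℝ) :=
        sum_le_card_nsmul _ _ _ fun ℓ hℓ => by exact_mod_cast (mem_Icc.1 hℓ).2
    _ = (⌊x⌋₊ : ℝ) ^ 2 := by simp [sq]
    _ ≤ x ^ 2 := by gcongr; exact Nat.floor_le hx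

theorem tsum_add_one_add_rpow_le {α L : ℝ} (hα : 2 < α) (hL : 0 < L) :
    ∑' n : ℕ, (L + 1 + n) ^ (1 - α) ≤ L ^ (2 - α) / (α - 2) := by
  refine Real.tsum_le_of_sum_range_le (fun n => by positivity) fun N => ?_
  have hanti : AntitoneOn (fun t : ℝ => t ^ (1 - α)) (Set.Icc L (L + N)) :=
    fun x hx y _ hxy => rpow_le_rpow_of_nonpos (hL.trans_le hx.1) hxy (by linarith)
  have h0 : (0 : ℝ) ∉ Set.uIcc L (L + N) := Set.notMem_uIcc_of_lt hL (by positivity)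
  calc ∑ i ∈ range N, (L + 1 + i) ^ (1 - α) = ∑ i ∈ range N, (L + ↑(i + 1)) ^ (1 - α) := by
        push_cast; ring_nf
    _ ≤ ∫ t in L..L + N, t ^ (1 - α) := hanti.sum_le_integral
    _ = (L ^ (2 - α) - (L + N) ^ (2 - α)) / (α - 2) := by
        rw [integral_rpow (Or.inr ⟨by linarith, h0⟩), show 1 - α + 1 = 2 - α by ring,
          ← neg_div_neg_eq, neg_sub, neg_sub]
    _ ≤ L ^ (2 - α) / (α - 2) := by
        gcongr
        exact sub_le_self _ (by positivity)

theorem div_two_rpow_two_sub_mul_rpow_neg {α r c : ℝ} (hr : 0 < r) (hc : 0 < c) :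
    (r / c / 2) ^ (2 - α) / (α - 2) * c ^ (-α)
      = 2 ^ (α - 2) / ((α - 2) * r ^ (α - 2)) / c ^ 2 := by
  rw [show 2 - α = -(α - 2) by ring, rpow_neg (by positivity),
    div_rpow (by positivity) (by norm_num), div_rpow hr.le hc.le, rpow_neg hc.le, rpow_sub hc,
    rpow_two]
  have : 0 < r ^ (α - 2) := by positivity
  have : 0 < c ^ α := by positivity
  have : 0 < (2 : ℝ) ^ (α - 2) := by positivity
  field_simp

theorem tsum_far_field_le {α r c : ℝ} (hα : 2 < α) (hc : 0 < c) (hcr : c ≤ r) :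
    ∑' n : ℕ, ((⌊r / c⌋₊ : ℝ) + 1 + n) ^ (1 - α) * c ^ (-α)
      ≤ 2 ^ (α - 2) / ((α - 2) * r ^ (α - 2)) / c ^ 2 := by
  have hr : 0 < r := hc.trans_le hcr
  have hL : r / c / 2 < ⌊r / c⌋₊ := half_lt_natFloor ((one_le_div hc).2 hcr)
  have hL_pos : (0 : ℝ) < ⌊r / c⌋₊ := (by positivity : (0 : ℝ) < r / c / 2).trans hL
  rw [tsum_mul_right, ← div_two_rpow_two_sub_mul_rpow_neg hr hc]
  gcongr
  calc ∑' n : ℕ, ((⌊r / c⌋₊ : ℝ) + 1 + n) ^ (1 - α)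
      ≤ (⌊r / c⌋₊ : ℝ) ^ (2 - α) / (α - 2) := tsum_add_one_add_rpow_le hα hL_pos
    _ ≤ (r / c / 2) ^ (2 - α) / (α - 2) :=
        div_le_div_of_nonneg_right (rpow_le_rpow_of_nonpos (by positivity) hL.le (by linarith))
          (by linarith)

theorem near_far_field_gain_bound_general (α r₀ g β s : ℝ)
    (hα : 2 < α) (hg : 0 < g) (hβ1 : β < 1) (hs : 0 < s)
    (hns : (1 - β) * s ≤ r₀) :
    8 * g * (∑ ℓ ∈ Finset.Icc 1 ⌊r₀ / ((1 - β) * s)⌋₊, (ℓ : ℝ)) +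
      8 * (∑' n : ℕ, ((⌊r₀ / ((1 - β) * s)⌋₊ : ℝ) + 1 + n) ^ (1 - α)
            * (1 - β) ^ (-α) * s ^ (-α)) ≤
    (8 / ((1 - β) ^ 2 * s ^ 2)) * (g * r₀ ^ 2 + (2 : ℝ) ^ (α - 2) / ((α - 2) * r₀ ^ (α - 2))) := by
  have hβ : 0 < 1 - β := sub_pos.2 hβ1
  have hc : 0 < (1 - β) * s := mul_pos hβ hs
  have near := sum_Icc_one_natFloor_le_sq (div_pos (hc.trans_le hns) hc).le
  have far := tsum_far_field_le hα hc hns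
  simp_rw [mul_assoc _ ((1 - β) ^ (-α)), ← mul_rpow hβ.le hs.le]
  calc _ ≤ 8 * g * (r₀ / ((1 - β) * s)) ^ 2
        + 8 * (2 ^ (α - 2) / ((α - 2) * r₀ ^ (α - 2)) / ((1 - β) * s) ^ 2) := by gcongr
    _ = _ := by field_simp

theorem near_far_field_gain_bound (α r₀ g β s : ℝ)
    (hα : 2 < α) (hr₀ : 0 < r₀) (hg : 0 < g) (hβ0 : 0 ≤ β) (hβ1 : β < 1) (hs : 0 < s)
    (hns : (1 - β) * s ≤ r₀) :
    8 * g * (∑ ℓ ∈ Finset.Icc 1 ⌊r₀ / ((1 - β) * s)⌋₊, (ℓ : ℝ)) +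
      8 * (∑' n : ℕ, ((⌊r₀ / ((1 - β) * s)⌋₊ : ℝ) + 1 + n) ^ (1 - α)
            * (1 - β) ^ (-α) * s ^ (-α)) ≤
    (8 / ((1 - β) ^ 2 * s ^ 2)) * (g * r₀ ^ 2 + (2 : ℝ) ^ (α - 2) / ((α - 2) * r₀ ^ (α - 2))) :=
  near_far_field_gain_bound_general α r₀ g β s hα hg hβ1 hs hns
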